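/- arXiv:2407.04423 — 6 statements merged into one kernel-verified Lean document; each statement's English description precedes it below -/
import Mathlib

section
/- Let Φ : M_d(ℂ) → M_d(ℂ) be a linear map and let its Choi matrix J_Φ ∈ M_d(ℂ) ⊗ M_d(ℂ) be defined entrywise by J_Φ((i,k),(j,l)) = (1/d)·Φ(|i⟩⟨j|)(k,l). Then J_Φ is positive semidefinite if and only if Φ is completely positive, i.e., if and only if there exists a finite family of matrices K_a ∈ M_d(ℂ) such that Φ(X) = ∑_a K_a X K_aᴴ for all X ∈ M_d(ℂ). -/
open Matrix ComplexOrder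

/-!
The unnormalised Choi matrix `choi Φ` determines `Φ`, and the Kraus map `X ↦ K X Kᴴ` has
Choi matrix `vec K (vec K)ᴴ`. Kraus decompositions of `Φ` therefore correspond to
decompositions of `choi Φ` into rank-one positive matrices `v vᴴ`, and by the spectral theorem
these exist exactly when `choi Φ` is positive semidefinite.
-/

/-- The Choi matrix of a linear map `Φ : M_d(ℂ) → M_d(ℂ)`, with entries
`J_Φ((i,k),(j,l)) = (1/d) · Φ(|i⟩⟨j|)(k,l)`. -/
noncomputable def choiMatrix (d : ℕ)
    (Φ : Matrix (Fin d) (Fin d) ℂ →ₗ[ℂ] Matrix (Fin d) (Fin d) ℂ) :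
    Matrix (Fin d × Fin d) (Fin d × Fin d) ℂ :=
  Matrix.of fun p q => (1 / (d : ℂ)) * Φ (Matrix.single p.1 q.1 1) p.2 q.2

namespace Matrix

variable {l m n o ι R : Type*}

theorem mul_single_one_mul_apply [Fintype n] [Fintype o] [DecidableEq n] [DecidableEq o]
    [NonAssocSemiring R] (A : Matrix l n R) (B : Matrix o m R) (i : n) (j : o) (a : l) (b : m) :
    (A * single i j (1 : R) * B) a b = A a i * B j b := by
  simp [mul_apply, single, ite_and]

variable [Fintype n] [CommSemiring R]

section choi

variable [DecidableEq n]

def choi (Φ : Matrix n n R →ₗ[R] Matrix m m R) : Matrix (n × m) (n × m) R :=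
  of fun p q => Φ (single p.1 q.1 1) p.2 q.2

theorem choi_injective : Function.Injective (choi : (Matrix n n R →ₗ[R] Matrix m m R) → _) :=
  fun _ _ h => ext_linearMap R fun i j =>
    LinearMap.ext_ring <| ext fun k l => congrFun₂ h (i, k) (j, l)

end choi

variable [StarRing R] [Fintype ι]

def krausMap (K : ι → Matrix m n R) : Matrix n n R →ₗ[R] Matrix m m R where
  toFun X := ∑ a, K a * X * (K a)ᴴ
  map_add' X Y := by simp only [Matrix.mul_add, Matrix.add_mul, Finset.sum_add_distrib]
  map_smul' c X := by
    simp only [Matrix.mul_smul, Matrix.smul_mul, Finset.smul_sum, RingHom.id_apply]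

@[simp]
theorem krausMap_apply (K : ι → Matrix m n R) (X : Matrix n n R) :
    krausMap K X = ∑ a, K a * X * (K a)ᴴ := rfl

theorem choi_krausMap [DecidableEq n] (K : ι → Matrix m n R) :
    choi (krausMap K) = ∑ a, vecMulVec (vec (K a)) (star (vec (K a))) := by
  ext p q
  simp [choi, sum_apply, vecMulVec_apply, mul_single_one_mul_apply]

theorem posSemidef_choi_iff_exists_krausMap {𝕜 : Type*} [RCLike 𝕜] [Fintype m] [DecidableEq n]
    {Φ : Matrix n n 𝕜 →ₗ[𝕜] Matrix m m 𝕜} :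
    (choi Φ).PosSemidef ↔ ∃ (r : ℕ) (K : Fin r → Matrix m n 𝕜), Φ = krausMap K := by
  rw [posSemidef_iff_eq_sum_vecMulVec]
  constructor
  · rintro ⟨r, v, hv⟩
    refine ⟨r, fun a => of fun k i => v a (i, k), choi_injective ?_⟩
    rw [hv, choi_krausMap]
    rfl
  · rintro ⟨r, K, rfl⟩
    exact ⟨r, fun a => vec (K a), choi_krausMap K⟩

end Matrix

theorem choiMatrix_eq_smul_choi (d : ℕ)
    (Φ : Matrix (Fin d) (Fin d) ℂ →ₗ[ℂ] Matrix (Fin d) (Fin d) ℂ) :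
    choiMatrix d Φ = (1 / (d : ℂ)) • choi Φ := rfl

theorem posSemidef_choiMatrix_iff {d : ℕ}
    {Φ : Matrix (Fin d) (Fin d) ℂ →ₗ[ℂ] Matrix (Fin d) (Fin d) ℂ} :
    (choiMatrix d Φ).PosSemidef ↔ (choi Φ).PosSemidef := by
  -- for `d = 0` the factor `1 / d` is junk, but then both matrices are empty
  rcases d.eq_zero_or_pos with rfl | hd
  · simp only [Subsingleton.elim _ (0 : Matrix (Fin 0 × Fin 0) (Fin 0 × Fin 0) ℂ),
      PosSemidef.zero]
  have hd' : (0 : ℂ) < d := by exact_mod_cast hd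
  rw [choiMatrix_eq_smul_choi]
  refine ⟨fun h => ?_, fun h => h.smul (by positivity)⟩
  simpa [smul_smul, hd'.ne'] using h.smul hd'.le

/-- **Choi's theorem**: the Choi matrix `J_Φ` is positive semidefinite if and only if
`Φ` is completely positive, i.e. admits a Kraus decomposition
`Φ(X) = ∑ₐ Kₐ X Kₐᴴ`. -/
theorem choi_posSemidef_iff_completelyPositive (d : ℕ)
    (Φ : Matrix (Fin d) (Fin d) ℂ →ₗ[ℂ] Matrix (Fin d) (Fin d) ℂ) :
    (choiMatrix d Φ).PosSemidef ↔
    ∃ (n : ℕ) (K : Fin n → Matrix (Fin d) (Fin d) ℂ),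
      ∀ X : Matrix (Fin d) (Fin d) ℂ, Φ X = ∑ a, K a * X * (K a)ᴴ := by
  simp only [posSemidef_choiMatrix_iff, posSemidef_choi_iff_exists_krausMap, LinearMap.ext_iff,
    krausMap_apply]
end

section
/- Let ρ be a matrix on ℂ^{d_A} ⊗ ℂ^{d_B} (indexed by pairs (i,k),(j,l)) that is separable, i.e., ρ = ∑_m λ_m σ_m ⊗ τ_m with λ_m ≥ 0, ∑_m λ_m = 1, and σ_m, τ_m positive semidefinite matrices of unit trace on ℂ^{d_A} and ℂ^{d_B} respectively. Then the partial transpose ρ^{T_B}, defined entrywise by ρ^{T_B}((i,k),(j,l)) = ρ((i,l),(j,k)), is positive semidefinite. -/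
open Matrix Kronecker ComplexOrder

/-- A bipartite matrix on `ℂ^{dA} ⊗ ℂ^{dB}` is separable if it is a finite convex
combination of Kronecker products of positive semidefinite unit-trace matrices. -/
def Separable {dA dB : ℕ} (ρ : Matrix (Fin dA × Fin dB) (Fin dA × Fin dB) ℂ) : Prop :=
  ∃ (n : ℕ) (lam : Fin n → ℝ) (σ : Fin n → Matrix (Fin dA) (Fin dA) ℂ)
    (τ : Fin n → Matrix (Fin dB) (Fin dB) ℂ),
    (∀ m, 0 ≤ lam m) ∧ (∑ m, lam m = 1) ∧
    (∀ m, (σ m).PosSemidef ∧ (σ m).trace = 1) ∧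
    (∀ m, (τ m).PosSemidef ∧ (τ m).trace = 1) ∧
    ρ = ∑ m, (lam m : ℂ) • (σ m ⊗ₖ τ m)

/-- The partial transpose with respect to the second subsystem:
`ρ^{T_B}((i,k),(j,l)) = ρ((i,l),(j,k))`. -/
def partialTransposeB {dA dB : ℕ}
    (ρ : Matrix (Fin dA × Fin dB) (Fin dA × Fin dB) ℂ) :
    Matrix (Fin dA × Fin dB) (Fin dA × Fin dB) ℂ :=
  Matrix.of fun p q => ρ (p.1, q.2) (q.1, p.2)

section PartialTranspose

variable {dA dB : ℕ}

theorem partialTransposeB_sum {ι : Type*} (s : Finset ι)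
    (ρ : ι → Matrix (Fin dA × Fin dB) (Fin dA × Fin dB) ℂ) :
    partialTransposeB (∑ i ∈ s, ρ i) = ∑ i ∈ s, partialTransposeB (ρ i) := by
  ext p q
  simp only [partialTransposeB, of_apply, Matrix.sum_apply]

theorem partialTransposeB_smul (c : ℂ) (ρ : Matrix (Fin dA × Fin dB) (Fin dA × Fin dB) ℂ) :
    partialTransposeB (c • ρ) = c • partialTransposeB ρ :=
  rfl

theorem partialTransposeB_kronecker (σ : Matrix (Fin dA) (Fin dA) ℂ)
    (τ : Matrix (Fin dB) (Fin dB) ℂ) : partialTransposeB (σ ⊗ₖ τ) = σ ⊗ₖ τᵀ :=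
  rfl

end PartialTranspose

/-- **Peres–Horodecki (PPT) criterion, necessity**: every separable bipartite state
has a positive semidefinite partial transpose. -/
theorem separable_partialTranspose_posSemidef {dA dB : ℕ}
    (ρ : Matrix (Fin dA × Fin dB) (Fin dA × Fin dB) ℂ)
    (hsep : Separable ρ) : (partialTransposeB ρ).PosSemidef := by
  obtain ⟨n, lam, σ, τ, hlam, -, hσ, hτ, rfl⟩ := hsep
  rw [partialTransposeB_sum]
  refine posSemidef_sum _ fun m _ => ?_
  rw [partialTransposeB_smul, partialTransposeB_kronecker]
  exact ((hσ m).1.kronecker (hτ m).1.transpose).smul (Complex.zero_le_real.mpr (hlam m))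
end

section
/- Let A, B be d×d complex matrices with diag(A) = diag(B) and let ρ_(A,B) = ∑_{i,j} A_{ij} |ij⟩⟨ij| + ∑_{i≠j} B_{ij} |ii⟩⟨jj| on ℂ^d ⊗ ℂ^d. Then ρ_(A,B) is positive semidefinite if and only if A is entrywise nonnegative (in particular real) and B is positive semidefinite. -/
open Matrix ComplexOrder

/-- The CLDUI state `ρ_(A,B)` on `ℂ^d ⊗ ℂ^d`: entries `A_{ij}` at positions
`((i,j),(i,j))`, `B_{ij}` at positions `((i,i),(j,j))` for `i ≠ j`, zero elsewhere. -/
def cldui {d : ℕ} (A B : Matrix (Fin d) (Fin d) ℂ) :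
    Matrix (Fin d × Fin d) (Fin d × Fin d) ℂ :=
  Matrix.of fun p q =>
    if p = q then A p.1 p.2
    else if p.1 = p.2 ∧ q.1 = q.2 then B p.1 q.1 else 0

/-!
`ρ_(A,B)` is the sum of a diagonal matrix carrying the entries `A_{ij}`, `i ≠ j`, and of
`V B Vᴴ`, where `V` is the isometry `|i⟩ ↦ |ii⟩`; both summands are positive semidefinite
when `A ≥ 0` and `B ⪰ 0`. Conversely, the `A_{ij}` are diagonal entries of `ρ_(A,B)`, and `B`
is its compression `Vᴴ ρ_(A,B) V` to the span of the `|ii⟩`.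
-/

section DiagEmbedding

variable (n R : Type*) [DecidableEq n] [Fintype n] [Semiring R]

abbrev diagEmbedding : Matrix (n × n) n R :=
  (1 : Matrix (n × n) (n × n) R).submatrix id fun i => (i, i)

variable {n R}

lemma diagEmbedding_mul_apply {m : Type*} (M : Matrix n m R) (p : n × n) (k : m) :
    (diagEmbedding n R * M) p k = if p.1 = p.2 then M p.1 k else 0 := by
  obtain ⟨i, i'⟩ := p
  by_cases hi : i = i'
  · subst hi; simp [mul_apply, one_apply]
  · simp only [mul_apply, one_apply, submatrix_apply, id, Prod.mk.injEq, hi, if_false,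
      ite_mul, one_mul, zero_mul]
    exact Finset.sum_eq_zero fun x _ => if_neg fun h => hi (h.1.trans h.2.symm)

lemma mul_conjTranspose_diagEmbedding_apply [StarRing R] {m : Type*} (M : Matrix m n R) (k : m)
    (q : n × n) :
    (M * (diagEmbedding n R)ᴴ) k q = if q.1 = q.2 then M k q.1 else 0 := by
  rw [← conjTranspose_conjTranspose (M * _), conjTranspose_mul, conjTranspose_conjTranspose,
    conjTranspose_apply, diagEmbedding_mul_apply]
  split_ifs <;> simp

end DiagEmbedding

section Cldui

variable {d : ℕ} {A B : Matrix (Fin d) (Fin d) ℂ}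

lemma cldui_apply_self (A B : Matrix (Fin d) (Fin d) ℂ) (p : Fin d × Fin d) :
    cldui A B p p = A p.1 p.2 := by
  simp [cldui]

lemma cldui_submatrix_diag (hdiag : ∀ i, A i i = B i i) :
    (cldui A B).submatrix (fun i => (i, i)) (fun i => (i, i)) = B := by
  ext i j
  by_cases hij : i = j
  · subst hij; simp [cldui, hdiag]
  · simp [cldui, hij]

lemma cldui_eq_diagonal_add (hdiag : ∀ i, A i i = B i i) :
    cldui A B = diagonal (fun p => if p.1 = p.2 then 0 else A p.1 p.2)
      + diagEmbedding (Fin d) ℂ * B * (diagEmbedding (Fin d) ℂ)ᴴ := by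
  ext ⟨i, i'⟩ ⟨j, j'⟩
  rw [Matrix.add_apply, mul_conjTranspose_diagEmbedding_apply, diagEmbedding_mul_apply]
  by_cases hp : (i, i') = (j, j')
  · obtain ⟨rfl, rfl⟩ := Prod.mk.inj hp
    by_cases hi : i = i'
    · subst hi; simp [cldui, hdiag]
    · simp [cldui, hi]
  · simp [cldui, hp, ← ite_and, and_comm]

end Cldui

/-- `ρ_(A,B)` is positive semidefinite if and only if `A` is entrywise nonnegative
(in particular real) and `B` is positive semidefinite. -/
theorem cldui_posSemidef_iff {d : ℕ} (A B : Matrix (Fin d) (Fin d) ℂ)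
    (hdiag : ∀ i, A i i = B i i) :
    (cldui A B).PosSemidef ↔ (∀ i j, 0 ≤ A i j) ∧ B.PosSemidef := by
  constructor
  · intro hρ
    refine ⟨fun i j => cldui_apply_self A B (i, j) ▸ hρ.diag_nonneg, ?_⟩
    exact cldui_submatrix_diag hdiag ▸ hρ.submatrix _
  · rintro ⟨hA, hB⟩
    rw [cldui_eq_diagonal_add hdiag]
    refine .add (posSemidef_diagonal_iff.2 fun p => ?_) (hB.mul_mul_conjTranspose_same _)
    split_ifs
    exacts [le_rfl, hA _ _]
end

section
/- Let Φ : M_d(ℂ) → M_d(ℂ) be a linear map that is completely positive (there exist matrices K_a with Φ(X) = ∑_a K_a X K_aᴴ for all X), trace-preserving, and satisfies Φ(|i⟩⟨i|) = |i⟩⟨i| for every i ∈ {0,…,d−1}. Then there exist complex numbers α_{ij} with |1 + α_{ij}| ≤ 1 such that for every ρ ∈ M_d(ℂ), Φ(ρ) = ∑_i ρ_{ii}|i⟩⟨i| + ∑_{i≠j} ρ_{ij}(1+α_{ij})|i⟩⟨j|; that is, Φ(ρ)_{ii} = ρ_{ii} for all i and Φ(ρ)_{ij} = (1+α_{ij})ρ_{ij}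 with |1+α_{ij}| ≤ 1 for all i ≠ j. -/
open Matrix

/-!
Every Kraus operator is diagonal: the `(j, j)` entry of `Φ |i⟩⟨i|` is `∑ₐ |(K a) j i|²`, which
vanishes for `j ≠ i`. A diagonal Kraus family acts as the Schur multiplier
`ρ i j ↦ ⟪v j, v i⟫ * ρ i j`, where `v i = (K a i i)ₐ`. Fixing `|i⟩⟨i|` makes each `v i` a unit
vector, and Cauchy–Schwarz bounds the off-diagonal multipliers by `1`.
-/

section KrausFamily

variable {𝕜 ι κ : Type*} [RCLike 𝕜] [Fintype ι] [DecidableEq ι] [Fintype κ]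

theorem Matrix.mul_single_mul_conjTranspose_apply (A : Matrix ι ι 𝕜) (i j k : ι) :
    (A * single i i (1 : 𝕜) * Aᴴ) j k = A j i * star (A k i) := by
  simp [mul_apply, single_apply, ite_and, Finset.sum_ite_eq]

theorem Matrix.diagonal_mul_mul_conjTranspose_diagonal_apply (c : ι → 𝕜) (X : Matrix ι ι 𝕜)
    (i j : ι) : (diagonal c * X * (diagonal c)ᴴ) i j = c i * star (c j) * X i j := by
  rw [diagonal_conjTranspose, mul_diagonal, diagonal_mul, Pi.star_apply]
  ring

theorem isDiag_of_sum_mul_single_mul_conjTranspose_eq (K : κ → Matrix ι ι 𝕜)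
    (hfix : ∀ i, ∑ a, K a * single i i (1 : 𝕜) * (K a)ᴴ = single i i 1) (a : κ) :
    (K a).IsDiag := by
  intro j i hji
  have hsum : ∑ b, ‖K b j i‖ ^ 2 = 0 := by
    have h := congrArg (fun M => RCLike.re (M j j)) (hfix i)
    simpa [Matrix.sum_apply, mul_single_mul_conjTranspose_apply, RCLike.mul_conj,
      single_apply_of_row_ne hji.symm] using h
  have hsq : ‖K a j i‖ ^ 2 = 0 :=
    (Finset.sum_eq_zero_iff_of_nonneg fun b _ => sq_nonneg ‖K b j i‖).mp hsum a (Finset.mem_univ a)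
  simpa using hsq

def diagKrausVector (K : κ → Matrix ι ι 𝕜) (i : ι) : EuclideanSpace 𝕜 κ :=
  WithLp.toLp 2 fun a => K a i i

theorem sum_mul_mul_conjTranspose_apply_of_isDiag {K : κ → Matrix ι ι 𝕜}
    (hK : ∀ a, (K a).IsDiag) (X : Matrix ι ι 𝕜) (i j : ι) :
    (∑ a, K a * X * (K a)ᴴ) i j = inner 𝕜 (diagKrausVector K j) (diagKrausVector K i) * X i j := by
  simp only [Matrix.sum_apply, PiLp.inner_apply, diagKrausVector, Finset.sum_mul]
  refine Finset.sum_congr rfl fun a _ => ?_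
  rw [← (hK a).diagonal_diag, diagonal_mul_mul_conjTranspose_diagonal_apply]
  simp [mul_comm]

end KrausFamily

theorem norm_eq_one_of_inner_self_eq_one {𝕜 E : Type*} [RCLike 𝕜] [NormedAddCommGroup E]
    [InnerProductSpace 𝕜 E] {x : E} (hx : inner 𝕜 x x = 1) : ‖x‖ = 1 := by
  have : (‖x‖ : 𝕜) ^ 2 = 1 := (inner_self_eq_norm_sq_to_K x).symm.trans hx
  exact (pow_eq_one_iff_of_nonneg (norm_nonneg x) two_ne_zero).mp (by exact_mod_cast this)

theorem cptp_fixing_diagonal_projectors_is_dephasing_general {d : ℕ}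
    (Φ : Matrix (Fin d) (Fin d) ℂ →ₗ[ℂ] Matrix (Fin d) (Fin d) ℂ)
    (hCP : ∃ (n : ℕ) (K : Fin n → Matrix (Fin d) (Fin d) ℂ),
      ∀ X : Matrix (Fin d) (Fin d) ℂ, Φ X = ∑ a, K a * X * (K a)ᴴ)
    (hfix : ∀ i : Fin d,
      Φ (Matrix.single i i 1) = Matrix.single i i 1) :
    ∃ α : Fin d → Fin d → ℂ,
      (∀ i j, i ≠ j → ‖1 + α i j‖ ≤ 1) ∧
      ∀ ρ : Matrix (Fin d) (Fin d) ℂ,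
        (∀ i, Φ ρ i i = ρ i i) ∧
        (∀ i j, i ≠ j → Φ ρ i j = (1 + α i j) * ρ i j) := by
  obtain ⟨n, K, hK⟩ := hCP
  have hdiag :=
    isDiag_of_sum_mul_single_mul_conjTranspose_eq K fun i => (hK _).symm.trans (hfix i)
  set v := diagKrausVector K
  have hΦ (ρ : Matrix (Fin d) (Fin d) ℂ) (i j : Fin d) :
      Φ ρ i j = inner ℂ (v j) (v i) * ρ i j := by
    rw [hK, sum_mul_mul_conjTranspose_apply_of_isDiag hdiag]
  have hv (i : Fin d) : inner ℂ (v i) (v i) = 1 := by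
    have h := hΦ (single i i 1) i i
    rwa [hfix, single_apply_same, mul_one, eq_comm] at h
  refine ⟨fun i j => inner ℂ (v j) (v i) - 1, fun i j _ => ?_,
    fun ρ => ⟨fun i => ?_, fun i j _ => ?_⟩⟩
  · simpa [norm_eq_one_of_inner_self_eq_one (hv _)] using norm_inner_le_norm (𝕜 := ℂ) (v j) (v i)
  · rw [hΦ, hv, one_mul]
  · rw [hΦ, add_sub_cancel]

/-- **Structure of CPTP maps fixing all core projectors** (Lewenstein et al. 2020):
if a completely positive trace-preserving map `Φ` satisfies `Φ(|i⟩⟨i|) = |i⟩⟨i|` for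
every `i`, then there exist `α_{ij} ∈ ℂ` with `|1 + α_{ij}| ≤ 1` such that
`Φ(ρ) = ∑ᵢ ρ_{ii}|i⟩⟨i| + ∑_{i≠j} ρ_{ij}(1+α_{ij})|i⟩⟨j|` for every `ρ`. -/
theorem cptp_fixing_diagonal_projectors_is_dephasing {d : ℕ}
    (Φ : Matrix (Fin d) (Fin d) ℂ →ₗ[ℂ] Matrix (Fin d) (Fin d) ℂ)
    (hCP : ∃ (n : ℕ) (K : Fin n → Matrix (Fin d) (Fin d) ℂ),
      ∀ X : Matrix (Fin d) (Fin d) ℂ, Φ X = ∑ a, K a * X * (K a)ᴴ)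
    (hTP : ∀ X : Matrix (Fin d) (Fin d) ℂ, (Φ X).trace = X.trace)
    (hfix : ∀ i : Fin d,
      Φ (Matrix.single i i 1) = Matrix.single i i 1) :
    ∃ α : Fin d → Fin d → ℂ,
      (∀ i j, i ≠ j → ‖1 + α i j‖ ≤ 1) ∧
      ∀ ρ : Matrix (Fin d) (Fin d) ℂ,
        (∀ i, Φ ρ i i = ρ i i) ∧
        (∀ i j, i ≠ j → Φ ρ i j = (1 + α i j) * ρ i j) :=
  cptp_fixing_diagonal_projectors_is_dephasing_general Φ hCP hfix
end

section
/- Let p^{(i)}_j ≥ 0 and α_{ij} ∈ ℂ with α_{ji} = conj(α_{ij}) for i ≠ j, and let J be the matrix on ℂ^d ⊗ ℂ^d defined by J = (1/d)∑_{i,j} p^{(i)}_j |ij⟩⟨ij| + (1/d)∑_{i≠j} (1+α_{ij}) |ii⟩⟨jj|. Then J is positive semidefinite if and only if the d×d matrix Ĵ with entries Ĵ_{ii} = p^{(i)}_i/d and Ĵ_{ij} = (1+α_{ij})/d for i ≠ j is positive semidefinite. -/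
open Matrix ComplexOrder

/-- The Choi operator `J` of the multicore-fibre channel:
`J((i,j),(i,j)) = p⁽ⁱ⁾ⱼ/d`, `J((i,i),(j,j)) = (1+α_{ij})/d` for `i ≠ j`,
all other entries zero. -/
noncomputable def mcfChoi {d : ℕ} (p : Fin d → Fin d → ℝ) (α : Fin d → Fin d → ℂ) :
    Matrix (Fin d × Fin d) (Fin d × Fin d) ℂ :=
  Matrix.of fun x y =>
    if x = y then (p x.1 x.2 : ℂ) / d
    else if x.1 = x.2 ∧ y.1 = y.2 then (1 + α x.1 y.1) / d else 0

/-- The reduced Choi matrix `Ĵ`: diagonal entries `p⁽ⁱ⁾ᵢ/d`, off-diagonal entries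
`(1+α_{ij})/d`. -/
noncomputable def mcfChoiHat {d : ℕ} (p : Fin d → Fin d → ℝ)
    (α : Fin d → Fin d → ℂ) : Matrix (Fin d) (Fin d) ℂ :=
  Matrix.of fun i j => if i = j then (p i i : ℂ) / d else (1 + α i j) / d

/-- Embedding matrix sending basis vector `k` to `|kk⟩`. -/
def mcfP (d : ℕ) : Matrix (Fin d × Fin d) (Fin d) ℂ :=
  Matrix.of fun a k => if a = (k, k) then 1 else 0

/-- Compressing `J` by the diagonal embedding gives `Ĵ`. -/
lemma mcfP_conj_key {d : ℕ} (p : Fin d → Fin d → ℝ) (α : Fin d → Fin d → ℂ) :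
    (mcfP d)ᴴ * mcfChoi p α * mcfP d = mcfChoiHat p α := by
  ext k l
  rw [Matrix.mul_apply]
  simp only [mcfP, Matrix.of_apply, mul_ite, mul_one, mul_zero]
  rw [Finset.sum_ite_eq' Finset.univ ((l,l) : Fin d × Fin d)]
  simp only [Finset.mem_univ, if_true]
  rw [Matrix.mul_apply]
  simp only [Matrix.conjTranspose_apply, mcfP, Matrix.of_apply,
    apply_ite (star : ℂ → ℂ), star_one, star_zero, ite_mul, one_mul, zero_mul]
  rw [Finset.sum_ite_eq' Finset.univ ((k,k) : Fin d × Fin d)]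
  simp [mcfChoi, mcfChoiHat, Prod.ext_iff]

/-- `J` decomposes as a nonnegative diagonal matrix plus the embedded copy of `Ĵ`. -/
lemma mcfChoi_decomp {d : ℕ} (p : Fin d → Fin d → ℝ) (α : Fin d → Fin d → ℂ) :
    mcfChoi p α =
      Matrix.diagonal (fun a : Fin d × Fin d =>
        if a.1 = a.2 then 0 else (p a.1 a.2 : ℂ) / d)
      + mcfP d * mcfChoiHat p α * (mcfP d)ᴴ := by
  ext ⟨i, j⟩ ⟨k, l⟩
  simp only [mcfChoi, mcfChoiHat, mcfP, Matrix.add_apply, Matrix.diagonal_apply,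
    Matrix.mul_apply, Matrix.of_apply, Matrix.conjTranspose_apply, Prod.mk.injEq,
    Prod.ext_iff, apply_ite (star : ℂ → ℂ), star_one, star_zero,
    ite_mul, one_mul, zero_mul, mul_ite, mul_one, mul_zero]
  by_cases hij : i = j <;> by_cases hkl : k = l <;>
    simp_all [Finset.sum_ite_eq, Finset.sum_ite_eq', eq_comm]
  · rw [Finset.sum_eq_single j (fun x _ hx => ?_) (by simp)]
    · by_cases h : j = l
      · subst h; simp
      · rw [if_neg (show ¬ l = j from fun h' => h h'.symm), if_pos rfl, if_neg h]
    · have hjx : ¬ j = x := fun h => hx h.symm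
      by_cases h : l = x <;> simp [h, hjx]
  · have hz : ∀ x : Fin d, ¬(k = x ∧ l = x) := fun x h => hkl (h.1.trans h.2.symm)
    have hL : ¬(j = k ∧ j = l) := fun h => hkl (h.1.symm.trans h.2)
    simp [hz, hL]
  · have hz : ∀ x : Fin d, ¬(i = x ∧ j = x) := fun x h => hij (h.1.trans h.2.symm)
    simp [hz]
  · have hz : ∀ x : Fin d, ¬(i = x ∧ j = x) := fun x h => hij (h.1.trans h.2.symm)
    simp [hz]

/-- `J` is positive semidefinite if and only if `Ĵ` is positive semidefinite. -/
theorem mcfChoi_posSemidef_iff_hat {d : ℕ}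
    (p : Fin d → Fin d → ℝ) (α : Fin d → Fin d → ℂ)
    (hp : ∀ i j, 0 ≤ p i j)
    (hα : ∀ i j : Fin d, i ≠ j → α j i = starRingEnd ℂ (α i j)) :
    (mcfChoi p α).PosSemidef ↔ (mcfChoiHat p α).PosSemidef := by
  constructor
  · intro h
    have := h.mul_mul_conjTranspose_same (mcfP d)ᴴ
    rwa [conjTranspose_conjTranspose, mcfP_conj_key] at this
  · intro h
    rw [mcfChoi_decomp p α]
    refine Matrix.PosSemidef.add ?_ (h.mul_mul_conjTranspose_same (mcfP d))
    refine Matrix.posSemidef_diagonal_iff.2 fun a => ?_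
    by_cases ha : a.1 = a.2
    · simp [ha]
    · simp only [ha, if_false]
      have h0 : (0:ℝ) ≤ p a.1 a.2 / d := div_nonneg (hp a.1 a.2) (Nat.cast_nonneg d)
      calc (0:ℂ) = ((0:ℝ):ℂ) := by norm_num
        _ ≤ ((p a.1 a.2 / d : ℝ) : ℂ) := by exact_mod_cast h0
        _ = (p a.1 a.2 : ℂ) / d := by push_cast; ring
end

section
/- The 6×6 matrix M = (1/6)·[[1/3,1/4,1/12,0,1/12,1/4],[1/4,1/3,1/4,1/12,0,1/12],[1/12,1/4,1/3,1/4,1/12,0],[0,1/12,1/4,1/3,1/4,1/12],[1/12,0,1/12,1/4,1/3,1/4],[1/4,1/12,0,1/12,1/4,1/3]] is doubly nonnegative (positive semidefinite with nonnegative entries) and every row sum and column sum of M equals 1/6, but M is not completely positive: there is no entrywise nonnegative matrix B with M = B Bᵀ. -/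
/-!
`6 • Mex` is the circulant matrix with first row `(1/3, 1/4, 1/12, 0, 1/12, 1/4)`; its eigenvalues
are `1, 1/2, 1/2, 0, 0, 0`, so `Mex` is the Gram matrix of three real vectors and is positive
semidefinite.

It is not completely positive because of its zero pattern: if `Mex = B Bᵀ` with `B ≥ 0`, the zero
entries `Mex 0 3 = Mex 1 4 = Mex 2 5 = 0` force every column `b` of `B` to satisfy
`b 0 * b 3 = b 1 * b 4 = b 2 * b 5 = 0`. On such nonnegative vectors the quadratic form of the
circulant `Wex` (first row `(1, -3/4, 1/8, 0, 1/8, -3/4)`) is nonnegative, hence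
`∑ i j, Wex i j * (B Bᵀ) i j = ∑_b bᵀ Wex b ≥ 0`, whereas `∑ i j, Wex i j * Mex i j = -1/48`.
-/

open Matrix

/-- The `6 × 6` circulant matrix of the paper's example of a doubly nonnegative
matrix in `𝒟𝒩𝒩₆ \ 𝒞𝒫₆`. -/
noncomputable def Mex : Matrix (Fin 6) (Fin 6) ℝ :=
  (1 / 6 : ℝ) •
    !![1/3, 1/4, 1/12, 0, 1/12, 1/4;
       1/4, 1/3, 1/4, 1/12, 0, 1/12;
       1/12, 1/4, 1/3, 1/4, 1/12, 0;
       0, 1/12, 1/4, 1/3, 1/4, 1/12;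
       1/12, 0, 1/12, 1/4, 1/3, 1/4;
       1/4, 1/12, 0, 1/12, 1/4, 1/3]

section Separation

variable {n κ R : Type*} [Fintype n] [Fintype κ]

theorem sum_mul_mul_transpose_apply_eq_sum_dotProduct_mulVec [CommSemiring R]
    (W : Matrix n n R) (B : Matrix n κ R) :
    ∑ i, ∑ j, W i j * (B * Bᵀ) i j = ∑ c, Bᵀ c ⬝ᵥ W *ᵥ Bᵀ c := by
  simp only [mul_apply, transpose_apply, dotProduct, mulVec, Finset.mul_sum]
  simp_rw [Finset.sum_comm (γ := κ)]
  congr! 3 with i j c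
  ring

theorem ne_mul_transpose_of_separating [CommSemiring R] [PartialOrder R] [IsOrderedRing R]
    {M : Matrix n n R} (W : Matrix n n R)
    (hW : ∀ x : n → R, 0 ≤ x → (∀ i j, M i j = 0 → x i * x j = 0) → 0 ≤ x ⬝ᵥ W *ᵥ x)
    (hWM : ∑ i, ∑ j, W i j * M i j < 0) {B : Matrix n κ R} (hB : ∀ i c, 0 ≤ B i c) :
    M ≠ B * Bᵀ := by
  rintro rfl
  refine hWM.not_ge ?_
  rw [sum_mul_mul_transpose_apply_eq_sum_dotProduct_mulVec]
  refine Finset.sum_nonneg fun c _ => hW _ (fun i => hB i c) fun i j hij => ?_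
  rw [mul_apply] at hij
  exact (Finset.sum_eq_zero_iff_of_nonneg fun c _ => mul_nonneg (hB i c) (hB j c)).mp hij c
    (Finset.mem_univ c)

end Separation

/-- The columns are the all-ones vector and the real and imaginary parts of the Fourier vector
`(ω ^ k)ₖ`, `ω` a primitive sixth root of unity, rescaled to integers. -/
def Fex : Matrix (Fin 6) (Fin 3) ℝ :=
  !![1, 2, 0;
     1, 1, 1;
     1, -1, 1;
     1, -2, 0;
     1, -1, -1;
     1, 1, -1]

lemma Mex_eq_Fex_mul_diagonal_mul_transpose :
    Mex = Fex * diagonal (![1/36, 1/144, 1/48] : Fin 3 → ℝ) * Fexᵀ := by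
  ext i j
  rw [mul_apply]
  simp only [mul_diagonal, transpose_apply, Fin.sum_univ_three]
  fin_cases i <;> fin_cases j <;> norm_num [Mex, Fex, cons_val_two]

lemma Mex_posSemidef : Mex.PosSemidef := by
  rw [Mex_eq_Fex_mul_diagonal_mul_transpose]
  refine PosSemidef.mul_mul_conjTranspose_same (PosSemidef.diagonal fun i => ?_) Fex
  fin_cases i <;> simp

lemma Mex_nonneg (i j : Fin 6) : 0 ≤ Mex i j := by
  fin_cases i <;> fin_cases j <;> simp [Mex]

lemma sum_Mex_row (i : Fin 6) : ∑ j, Mex i j = 1 / 6 := by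
  fin_cases i <;> simp [Mex, Fin.sum_univ_six] <;> norm_num

noncomputable def Wex : Matrix (Fin 6) (Fin 6) ℝ :=
  !![1, -3/4, 1/8, 0, 1/8, -3/4;
     -3/4, 1, -3/4, 1/8, 0, 1/8;
     1/8, -3/4, 1, -3/4, 1/8, 0;
     0, 1/8, -3/4, 1, -3/4, 1/8;
     1/8, 0, 1/8, -3/4, 1, -3/4;
     -3/4, 1/8, 0, 1/8, -3/4, 1]

lemma dotProduct_Wex_mulVec (x : Fin 6 → ℝ) :
    x ⬝ᵥ Wex *ᵥ x = x 0 ^ 2 + x 1 ^ 2 + x 2 ^ 2 + x 3 ^ 2 + x 4 ^ 2 + x 5 ^ 2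
      - 3 / 2 * (x 0 * x 1 + x 1 * x 2 + x 2 * x 3 + x 3 * x 4 + x 4 * x 5 + x 5 * x 0)
      + 1 / 4 * (x 0 * x 2 + x 1 * x 3 + x 2 * x 4 + x 3 * x 5 + x 4 * x 0 + x 5 * x 1) := by
  simp only [dotProduct, mulVec, Wex, Fin.sum_univ_six, of_apply, cons_val', cons_val_fin_one,
    cons_val_zero, cons_val_one, cons_val]
  ring

lemma Wex_form_consecutive_nonneg (a b c : ℝ) :
    0 ≤ a ^ 2 + b ^ 2 + c ^ 2 - 3 / 2 * (a * b + b * c) + 1 / 4 * (a * c) := by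
  have sos : a ^ 2 + b ^ 2 + c ^ 2 - 3 / 2 * (a * b + b * c) + 1 / 4 * (a * c) =
      ((3 * (a + c) - 4 * b) ^ 2 + 7 * (a - c) ^ 2) / 16 := by ring
  rw [sos]
  positivity

/-- A vector with `x₀ x₃ = x₁ x₄ = x₂ x₅ = 0` is supported on three cyclically consecutive indices
or on `{0, 2, 4}` or `{1, 3, 5}`; on the former the form is a sum of squares, on the latter all its
terms are nonnegative. -/
lemma Wex_form_nonneg {x₀ x₁ x₂ x₃ x₄ x₅ : ℝ} (h₀ : 0 ≤ x₀) (h₁ : 0 ≤ x₁) (h₂ : 0 ≤ x₂)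
    (h₃ : 0 ≤ x₃) (h₄ : 0 ≤ x₄) (h₅ : 0 ≤ x₅)
    (h₀₃ : x₀ * x₃ = 0) (h₁₄ : x₁ * x₄ = 0) (h₂₅ : x₂ * x₅ = 0) :
    0 ≤ x₀ ^ 2 + x₁ ^ 2 + x₂ ^ 2 + x₃ ^ 2 + x₄ ^ 2 + x₅ ^ 2
      - 3 / 2 * (x₀ * x₁ + x₁ * x₂ + x₂ * x₃ + x₃ * x₄ + x₄ * x₅ + x₅ * x₀)
      + 1 / 4 * (x₀ * x₂ + x₁ * x₃ + x₂ * x₄ + x₃ * x₅ + x₄ * x₀ + x₅ * x₁) := by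
  rcases mul_eq_zero.mp h₀₃ with rfl | rfl <;> rcases mul_eq_zero.mp h₁₄ with rfl | rfl <;>
    rcases mul_eq_zero.mp h₂₅ with rfl | rfl
  · linarith [Wex_form_consecutive_nonneg x₃ x₄ x₅]
  · linarith [Wex_form_consecutive_nonneg x₂ x₃ x₄]
  · nlinarith [mul_nonneg h₁ h₃, mul_nonneg h₃ h₅, mul_nonneg h₅ h₁]
  · linarith [Wex_form_consecutive_nonneg x₁ x₂ x₃]
  · linarith [Wex_form_consecutive_nonneg x₄ x₅ x₀]
  · nlinarith [mul_nonneg h₀ h₂, mul_nonneg h₂ h₄, mul_nonneg h₄ h₀]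
  · linarith [Wex_form_consecutive_nonneg x₅ x₀ x₁]
  · linarith [Wex_form_consecutive_nonneg x₀ x₁ x₂]

lemma sum_Wex_mul_Mex : ∑ i, ∑ j, Wex i j * Mex i j = -1 / 48 := by
  simp only [Fin.sum_univ_six, Wex, Mex, Matrix.smul_apply, of_apply, cons_val', cons_val_fin_one,
    cons_val_zero, cons_val_one, cons_val, smul_eq_mul]
  norm_num

/-- The matrix `Mex` is doubly nonnegative (positive semidefinite with nonnegative
entries), has all row and column sums equal to `1/6`, but is not completely
positive: there is no entrywise nonnegative `B` with `Mex = B Bᵀ`. -/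
theorem Mex_doublyNonnegative_not_completelyPositive :
    Mex.PosSemidef ∧
    (∀ i j, 0 ≤ Mex i j) ∧
    (∀ i, ∑ j, Mex i j = 1 / 6) ∧
    (∀ j, ∑ i, Mex i j = 1 / 6) ∧
    ¬ ∃ (k : ℕ) (B : Matrix (Fin 6) (Fin k) ℝ),
        (∀ i j, 0 ≤ B i j) ∧ Mex = B * Bᵀ := by
  refine ⟨Mex_posSemidef, Mex_nonneg, sum_Mex_row, fun j => ?_, ?_⟩
  · rw [← sum_Mex_row j]
    exact Finset.sum_congr rfl fun i _ => by rw [← Mex_posSemidef.isHermitian.apply, star_trivial]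
  rintro ⟨k, B, hB, hMex⟩
  refine ne_mul_transpose_of_separating Wex (fun x hx hxMex => ?_) ?_ hB hMex
  · rw [dotProduct_Wex_mulVec]
    exact Wex_form_nonneg (hx 0) (hx 1) (hx 2) (hx 3) (hx 4) (hx 5)
      (hxMex 0 3 (by simp [Mex])) (hxMex 1 4 (by simp [Mex])) (hxMex 2 5 (by simp [Mex]))
  · rw [sum_Wex_mul_Mex]
    norm_num
end
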